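/- arXiv:2009.07370 — 3 statements merged into one kernel-verified Lean document; each statement's English description precedes it below -/
import Mathlib

section
/- Let θ ∈ ℝ, ξ > 0, v = ξ·(1 − cos θ, −sin θ), and R x = L_θ x + v. Then for every n ∈ ℕ and x = (x₁, x₂) ∈ ℝ², ‖Rⁿ x‖² = ‖x‖² − 4ξ x₁ sin²(nθ/2) − 4ξ x₂ sin(nθ/2)cos(nθ/2) + 4ξ² sin²(nθ/2). -/
/-!
The affine map `R` fixes `p = (ξ, 0)`, so it is the rotation by `θ` about `p`: conjugating by the
translation `x ↦ x - p` turns `R` into `L θ`, hence `Rⁿ x = p + L (nθ) (x - p)`. Expanding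
`‖p + L (nθ) (x - p)‖²` in coordinates and using the half-angle formulas gives the identity.
-/

/-- The 2×2 rotation matrix by angle θ. -/
noncomputable def L (θ : ℝ) : Matrix (Fin 2) (Fin 2) ℝ :=
  !![Real.cos θ, -Real.sin θ; Real.sin θ, Real.cos θ]

/-- View a plain vector in `Fin 2 → ℝ` as an element of the Euclidean plane. -/
def toE (x : Fin 2 → ℝ) : EuclideanSpace ℝ (Fin 2) := WithLp.toLp 2 x

/-- Matrix–vector multiplication on the Euclidean plane. -/
noncomputable def mulVecE (M : Matrix (Fin 2) (Fin 2) ℝ) (x : EuclideanSpace ℝ (Fin 2)) :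
    EuclideanSpace ℝ (Fin 2) := WithLp.toLp 2 (M.mulVec x)

open Real Function

theorem L_zero : L 0 = 1 := by
  ext i j; fin_cases i <;> fin_cases j <;> simp [L]

theorem L_add (a b : ℝ) : L (a + b) = L a * L b := by
  ext i j
  fin_cases i <;> fin_cases j <;> simp [L, cos_add, sin_add] <;> ring

theorem mulVecE_one (x : EuclideanSpace ℝ (Fin 2)) : mulVecE 1 x = x := by
  simp [mulVecE]

theorem mulVecE_mul (M N : Matrix (Fin 2) (Fin 2) ℝ) (x : EuclideanSpace ℝ (Fin 2)) :
    mulVecE (M * N) x = mulVecE M (mulVecE N x) := by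
  simp only [mulVecE, WithLp.ofLp_toLp, Matrix.mulVec_mulVec]

theorem mulVecE_sub (M : Matrix (Fin 2) (Fin 2) ℝ) (x y : EuclideanSpace ℝ (Fin 2)) :
    mulVecE M (x - y) = mulVecE M x - mulVecE M y := by
  simp only [mulVecE, WithLp.ofLp_sub, Matrix.mulVec_sub, WithLp.toLp_sub]

theorem iterate_mulVecE_L (θ : ℝ) (n : ℕ) :
    (mulVecE (L θ))^[n] = mulVecE (L (n * θ)) := by
  induction n with
  | zero => funext x; simp [L_zero, mulVecE_one]
  | succ n ih =>
    funext x
    rw [iterate_succ_apply', ih, ← mulVecE_mul, ← L_add]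
    congr 2; push_cast; ring

theorem mulVecE_L_apply (φ : ℝ) (y : EuclideanSpace ℝ (Fin 2)) :
    mulVecE (L φ) y = toE ![cos φ * y 0 - sin φ * y 1, sin φ * y 0 + cos φ * y 1] := by
  ext i; fin_cases i <;> simp [mulVecE, L, toE, dotProduct, Fin.sum_univ_two]; ring

theorem mulVecE_L_add_smul_eq_self (θ ξ : ℝ) :
    mulVecE (L θ) (toE ![ξ, 0]) + ξ • toE ![1 - cos θ, -sin θ] = toE ![ξ, 0] := by
  ext i; fin_cases i <;> simp [mulVecE_L_apply, toE] <;> ring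

theorem sq_add_sq_rotate_about (ξ φ a b : ℝ) :
    (ξ + (cos φ * (a - ξ) - sin φ * b)) ^ 2 + (sin φ * (a - ξ) + cos φ * b) ^ 2
      = a ^ 2 + b ^ 2 - 4 * ξ * a * sin (φ / 2) ^ 2 - 4 * ξ * b * sin (φ / 2) * cos (φ / 2)
        + 4 * ξ ^ 2 * sin (φ / 2) ^ 2 := by
  obtain ⟨ψ, rfl⟩ : ∃ ψ, φ = 2 * ψ := ⟨φ / 2, by ring⟩
  rw [mul_div_cancel_left₀ ψ two_ne_zero, cos_two_mul', sin_two_mul]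
  linear_combination (((a - ξ) ^ 2 + b ^ 2) * (sin ψ ^ 2 + cos ψ ^ 2 + 1) + 2 * ξ * (a - ξ))
    * sin_sq_add_cos_sq ψ

theorem stmt_7_general (θ ξ : ℝ) (v : EuclideanSpace ℝ (Fin 2))
    (hv : v = ξ • toE ![1 - Real.cos θ, -Real.sin θ])
    (R : EuclideanSpace ℝ (Fin 2) → EuclideanSpace ℝ (Fin 2))
    (hR : ∀ x, R x = mulVecE (L θ) x + v) :
    ∀ (n : ℕ) (x : EuclideanSpace ℝ (Fin 2)),
      ‖R^[n] x‖ ^ 2 = ‖x‖ ^ 2 - 4 * ξ * x 0 * Real.sin (n * θ / 2) ^ 2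
        - 4 * ξ * x 1 * Real.sin (n * θ / 2) * Real.cos (n * θ / 2)
        + 4 * ξ ^ 2 * Real.sin (n * θ / 2) ^ 2 := by
  intro n x
  set p := toE ![ξ, 0]
  have hp : mulVecE (L θ) p + v = p := hv ▸ mulVecE_L_add_smul_eq_self θ ξ
  have hconj : Semiconj (· - p) R (mulVecE (L θ)) := fun y =>
    calc R y - p = mulVecE (L θ) y + v - (mulVecE (L θ) p + v) := by rw [hR, hp]
      _ = mulVecE (L θ) (y - p) := by rw [mulVecE_sub]; abel
  have hRn : R^[n] x = p + mulVecE (L (n * θ)) (x - p) := by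
    rw [← iterate_mulVecE_L]
    exact eq_add_of_sub_eq' (hconj.iterate_right n x)
  rw [hRn, EuclideanSpace.real_norm_sq_eq, EuclideanSpace.real_norm_sq_eq, mulVecE_L_apply]
  simpa [p, toE, Fin.sum_univ_two] using sq_add_sq_rotate_about ξ (n * θ) (x 0) (x 1)

theorem stmt_7 (θ ξ : ℝ) (hξ : 0 < ξ) (v : EuclideanSpace ℝ (Fin 2))
    (hv : v = ξ • toE ![1 - Real.cos θ, -Real.sin θ])
    (R : EuclideanSpace ℝ (Fin 2) → EuclideanSpace ℝ (Fin 2))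
    (hR : ∀ x, R x = mulVecE (L θ) x + v) :
    ∀ (n : ℕ) (x : EuclideanSpace ℝ (Fin 2)),
      ‖R^[n] x‖ ^ 2 = ‖x‖ ^ 2 - 4 * ξ * x 0 * Real.sin (n * θ / 2) ^ 2
        - 4 * ξ * x 1 * Real.sin (n * θ / 2) * Real.cos (n * θ / 2)
        + 4 * ξ ^ 2 * Real.sin (n * θ / 2) ^ 2 :=
  stmt_7_general θ ξ v hv R hR
end

section
/- Define the real sequence x_n := 4∑_{k≥1} sin²(π n/k!) (which is finite for each n). Then x_{n!} → 0 as n → ∞, with x_{n!} ≤ 4π²/(n(n+2)) for all n ≥ 1. -/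
/-!
The terms with `k ≤ n` vanish because `k!` divides `n!`. For the remaining terms,
`n! / (n + k)! ≤ (n + 1)⁻ᵏ`, so `sin² (π n! / (n + k)!) ≤ π² ((n + 1)²)⁻ᵏ`, and the geometric
tail `∑_{k ≥ 1} ((n + 1)²)⁻ᵏ` equals `1 / ((n + 1)² - 1) = 1 / (n (n + 2))`.
-/

open Real Filter
open scoped Nat

lemma sin_pi_mul_div_eq_zero_of_dvd {d m : ℕ} (h : d ∣ m) : sin (π * m / d) = 0 := by
  obtain ⟨q, rfl⟩ := h
  rcases eq_or_ne d 0 with rfl | hd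
  · simp
  · rw [show π * ((d * q : ℕ) : ℝ) / d = q * π by push_cast; field_simp]
    exact sin_nat_mul_pi q

lemma factorial_div_factorial_add_le (n k : ℕ) :
    (n ! : ℝ) / (n + k)! ≤ ((n : ℝ) + 1)⁻¹ ^ k := by
  rw [inv_pow, div_le_iff₀ (by positivity), ← div_eq_inv_mul, le_div_iff₀ (by positivity)]
  exact_mod_cast Nat.factorial_mul_pow_le_factorial

lemma sin_sq_pi_mul_factorial_div_factorial_add_le (n k : ℕ) :
    sin (π * n ! / (n + k)!) ^ 2 ≤ π ^ 2 * (((n : ℝ) + 1) ^ 2)⁻¹ ^ k := by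
  calc sin (π * n ! / (n + k)!) ^ 2
      ≤ (π * n ! / (n + k)!) ^ 2 := sin_sq_le_sq
    _ = π ^ 2 * ((n ! : ℝ) / (n + k)!) ^ 2 := by ring
    _ ≤ π ^ 2 * (((n : ℝ) + 1)⁻¹ ^ k) ^ 2 := by
        gcongr
        exact factorial_div_factorial_add_le n k
    _ = π ^ 2 * (((n : ℝ) + 1) ^ 2)⁻¹ ^ k := by
        rw [← pow_mul, ← inv_pow, ← pow_mul, mul_comm k]

lemma hasSum_inv_pow_succ {a : ℝ} (ha : 1 < a) :
    HasSum (fun k : ℕ => a⁻¹ ^ (k + 1)) (a - 1)⁻¹ := by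
  have h := (hasSum_geometric_of_lt_one (by positivity) (inv_lt_one_of_one_lt₀ ha)).mul_left a⁻¹
  have : a - 1 ≠ 0 := (sub_pos.2 ha).ne'
  rw [show a⁻¹ * (1 - a⁻¹)⁻¹ = (a - 1)⁻¹ by field_simp] at h
  simpa only [pow_succ'] using h

lemma tsum_le_tsum_of_eq_zero_of_le_nat_add {f g : ℕ → ℝ} (n : ℕ) (hf : 0 ≤ f)
    (hf_zero : ∀ k < n, f k = 0) (hfg : ∀ k, f (k + n) ≤ g k) (hg : Summable g) :
    ∑' k, f k ≤ ∑' k, g k := by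
  have hf_shift : Summable (fun k => f (k + n)) := hg.of_nonneg_of_le (fun k => hf _) hfg
  rw [← hf_shift.sum_add_tsum_nat_add',
    Finset.sum_eq_zero fun k hk => hf_zero k (Finset.mem_range.1 hk), zero_add]
  exact hf_shift.tsum_le_tsum hfg hg

theorem tsum_sin_sq_pi_mul_factorial_div_factorial_succ_le {n : ℕ} (hn : 0 < n) :
    ∑' k : ℕ, sin (π * (n ! : ℕ) / (k + 1)!) ^ 2 ≤ π ^ 2 / (n * (n + 2)) := by
  have ha : (1 : ℝ) < ((n : ℝ) + 1) ^ 2 := by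
    have : (0 : ℝ) < n := by exact_mod_cast hn
    nlinarith
  have hsum := (hasSum_inv_pow_succ ha).mul_left (π ^ 2)
  rw [show π ^ 2 / (n * (n + 2)) = π ^ 2 * ((((n : ℝ) + 1) ^ 2) - 1)⁻¹ by ring, ← hsum.tsum_eq]
  refine tsum_le_tsum_of_eq_zero_of_le_nat_add n (fun k => sq_nonneg _) (fun k hk => ?_)
    (fun k => ?_) hsum.summable
  · simp [sin_pi_mul_div_eq_zero_of_dvd (Nat.factorial_dvd_factorial hk)]
  · rw [show k + n + 1 = n + (k + 1) by ring]
    exact sin_sq_pi_mul_factorial_div_factorial_add_le n (k + 1)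

/-- For x_n := 4∑_{k≥1} sin²(π n/k!), one has x_{n!} → 0, with
    x_{n!} ≤ 4π²/(n(n+2)) for n ≥ 1. -/
theorem stmt_11 (x : ℕ → ℝ)
    (hx : ∀ n, x n = 4 * ∑' k : ℕ, sin (π * n / (k + 1)!) ^ 2) :
    Filter.Tendsto (fun n : ℕ => x (n !)) Filter.atTop (nhds 0) ∧
    ∀ n : ℕ, 1 ≤ n → x (n !) ≤ 4 * π ^ 2 / (n * (n + 2)) := by
  have hbound : ∀ n : ℕ, 1 ≤ n → x (n !) ≤ 4 * π ^ 2 / (n * (n + 2)) := fun n hn => by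
    rw [hx, mul_div_assoc]
    gcongr
    exact tsum_sin_sq_pi_mul_factorial_div_factorial_succ_le hn
  have hx_nonneg : ∀ n, 0 ≤ x n := fun n => by
    rw [hx]
    exact mul_nonneg zero_le_four (tsum_nonneg fun k => sq_nonneg _)
  have hlim : Tendsto (fun n : ℕ => 4 * π ^ 2 / ((n : ℝ) * (n + 2))) atTop (nhds 0) :=
    tendsto_const_nhds.div_atTop <| tendsto_natCast_atTop_atTop.atTop_mul_atTop₀ <|
      tendsto_atTop_add_const_right _ 2 tendsto_natCast_atTop_atTop
  refine ⟨squeeze_zero' (Eventually.of_forall fun n => hx_nonneg _) ?_ hlim, hbound⟩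
  filter_upwards [eventually_ge_atTop 1] with n hn
  exact hbound n hn
end

section
/- Define s_n := 1 + ∑_{m=1}^{n−1} ⌈m/2⌉·(m+2)!. Then for all integers k with 10 ≤ k ≤ n + 2, one has sin²(s_n π / k!) > 3/4. -/
open Real Nat

/-- s_n = 1 + ∑_{m=1}^{n-1} ⌈m/2⌉·(m+2)! . -/
noncomputable def s (n : ℕ) : ℤ :=
  1 + ∑ m ∈ Finset.Icc 1 (n - 1), ⌈(m : ℚ) / 2⌉ * ((m + 2)! : ℤ)

/-!
Write `k = m + 2`. Every term of `s n` beyond `s m` is a multiple of `k!`, so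
`s n π / k!` differs from `s m π / k!` by an integer multiple of `π`, which does not change
`sin²`. Since `s (m + 1) = s m + ⌈m/2⌉ (m + 2)!` and `3⌈m/2⌉` lies between `3m/2` and
`3(m+1)/2`, an induction from `s 8 = 1589311` shows `k! < 3 s m < 2 k!` for `k ≥ 10`.
Hence `s m π / k!` lies in `(π/3, 2π/3)`, where `sin² > 3/4`.
-/

lemma ceil_natCast_div_two (m : ℕ) : ⌈(m : ℚ) / 2⌉ = ((m + 1) / 2 : ℕ) := by
  rw [Int.ceil_eq_iff]
  rcases Nat.even_or_odd' m with ⟨j, rfl | rfl⟩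
  · rw [show (2 * j + 1) / 2 = j by omega]; push_cast; constructor <;> linarith
  · rw [show (2 * j + 1 + 1) / 2 = j + 1 by omega]; push_cast; constructor <;> linarith

lemma s_succ (m : ℕ) : s (m + 1) = s m + ((m + 1) / 2 : ℕ) * ((m + 2)! : ℤ) := by
  rw [← ceil_natCast_div_two]
  rcases m with _ | m
  · simp [s]
  · simp only [s, Nat.add_sub_cancel, Finset.sum_Icc_succ_top (by omega : 1 ≤ m + 1)]
    push_cast
    ring

lemma s_eight : s 8 = 1589311 := by
  simp only [s_succ, show s 0 = 1 from rfl]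
  norm_num [Nat.factorial]

lemma factorial_dvd_s_sub_s {m n : ℕ} (h : m ≤ n) : ((m + 2)! : ℤ) ∣ s n - s m := by
  induction n, h using Nat.le_induction with
  | base => simp
  | succ n hmn ih =>
    rw [s_succ, add_sub_right_comm]
    exact dvd_add ih <| Dvd.dvd.mul_left
      (Int.natCast_dvd_natCast.mpr (factorial_dvd_factorial (by omega))) _

lemma factorial_lt_three_mul_s_lt {m : ℕ} (hm : 8 ≤ m) :
    ((m + 2)! : ℤ) < 3 * s m ∧ 3 * s m < 2 * (m + 2)! := by
  induction m, hm using Nat.le_induction with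
  | base => rw [s_eight]; norm_num [Nat.factorial]
  | succ m hm ih =>
    obtain ⟨ih₁, ih₂⟩ := ih
    have hc₁ : m ≤ 2 * ((m + 1) / 2) := by omega
    have hc₂ : 2 * ((m + 1) / 2) ≤ m + 1 := by omega
    have hfac : (0 : ℤ) < (m + 2)! := by exact_mod_cast factorial_pos _
    rw [s_succ, factorial_succ (m + 2)]
    push_cast at hc₁ hc₂ ⊢
    constructor <;> nlinarith

lemma sin_sq_add_int_mul_pi (x : ℝ) (d : ℤ) : sin (x + d * π) ^ 2 = sin x ^ 2 := by
  rw [sin_add_int_mul_pi, mul_pow, ← zpow_natCast, ← zpow_mul, mul_comm d, zpow_mul]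
  norm_num

lemma three_quarters_lt_sin_sq {x : ℝ} (h₁ : π / 3 < x) (h₂ : x < 2 * π / 3) :
    3 / 4 < sin x ^ 2 := by
  have hcos₁ : cos x < 1 / 2 := by
    rw [← cos_pi_div_three]
    exact cos_lt_cos_of_nonneg_of_le_pi (by positivity) (by linarith [pi_pos]) h₁
  have hcos₂ : -(1 / 2) < cos x := by
    rw [← cos_pi_div_three, ← cos_pi_sub]
    exact cos_lt_cos_of_nonneg_of_le_pi (by linarith [pi_pos]) (by linarith [pi_pos])
      (by linarith)
  nlinarith [sin_sq_add_cos_sq x]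

lemma three_quarters_lt_sin_sq_mul_pi_div {a r : ℤ} {q : ℕ} (hdvd : (q : ℤ) ∣ a - r)
    (h₁ : (q : ℤ) < 3 * r) (h₂ : 3 * r < 2 * q) :
    3 / 4 < sin (a * π / q) ^ 2 := by
  obtain ⟨d, hd⟩ := hdvd
  have hq : (0 : ℝ) < q := by exact_mod_cast (by omega : (0 : ℤ) < q)
  have hr₁ : (q : ℝ) < 3 * r := by exact_mod_cast h₁
  have hr₂ : 3 * (r : ℝ) < 2 * q := by exact_mod_cast h₂
  have ha : (a : ℝ) * π / q = r * π / q + d * π := by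
    rw [show a = r + q * d by linarith]
    push_cast
    field_simp
  rw [ha, sin_sq_add_int_mul_pi]
  apply three_quarters_lt_sin_sq
  · rw [lt_div_iff₀ hq]; nlinarith [pi_pos]
  · rw [div_lt_iff₀ hq]; nlinarith [pi_pos]

theorem stmt_14_general (n : ℕ) :
    ∀ k : ℕ, 10 ≤ k → k ≤ n + 2 →
      3 / 4 < Real.sin ((s n : ℝ) * π / (k ! : ℝ)) ^ 2 := by
  intro k hk hkn
  obtain ⟨m, rfl⟩ : ∃ m, k = m + 2 := ⟨k - 2, by omega⟩
  obtain ⟨h₁, h₂⟩ := factorial_lt_three_mul_s_lt (m := m) (by omega)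
  exact three_quarters_lt_sin_sq_mul_pi_div (factorial_dvd_s_sub_s (by omega)) h₁ h₂

theorem stmt_14 (n : ℕ) (hn : 1 ≤ n) :
    ∀ k : ℕ, 10 ≤ k → k ≤ n + 2 →
      3 / 4 < Real.sin ((s n : ℝ) * π / (k ! : ℝ)) ^ 2 :=
  stmt_14_general n
end
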